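/- arXiv:1502.01217 — 6 statements merged into one kernel-verified Lean document; each statement's English description precedes it below -/
import Mathlib

section
/- Let a₀, a₁, a₂ be real numbers with a₀ > 0, a₁ < 0, and 2a₂³ − 9a₁a₂ + 27a₀ > 2(a₂² − 3a₁)^{3/2}. Then for every real u ≥ 0, u³ + a₂·u² + a₁·u + a₀ > 0; in particular the cubic u³ + a₂·u² + a₁·u + a₀ has no nonnegative real root. -/
/-!
With `s = √(a₂² − 3a₁)`, the cubic `f` has its local minimum at `u* = (s − a₂)/3`, and
`27 (f u − f u*) = (3u + a₂ − s)² (3u + a₂ + 2s)`, where `27 f u* = 2a₂³ − 9a₁a₂ + 27a₀ − 2 s³`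
is positive by hypothesis. Since `a₁ < 0` gives `s > |a₂|`, the factor `3u + a₂ + 2s` is
positive for `u ≥ 0`, so `f u ≥ f u* > 0` there.
-/

open Real

lemma rpow_three_halves_eq_mul_sqrt {x : ℝ} (hx : 0 ≤ x) : x ^ ((3 : ℝ) / 2) = x * √x := by
  rw [show (3 : ℝ) / 2 = 1 + 1 / 2 by norm_num, rpow_add' hx (by norm_num), rpow_one,
    sqrt_eq_rpow]

lemma cubic_mul_27_eq (a₀ a₁ a₂ s u : ℝ) (hs : s ^ 2 = a₂ ^ 2 - 3 * a₁) :
    27 * (u ^ 3 + a₂ * u ^ 2 + a₁ * u + a₀) =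
      (3 * u + a₂ - s) ^ 2 * (3 * u + a₂ + 2 * s) +
        (2 * a₂ ^ 3 - 9 * a₁ * a₂ + 27 * a₀ - 2 * (a₂ ^ 2 - 3 * a₁) * s) := by
  linear_combination (3 * (3 * u + a₂) - 2 * s) * hs

lemma neg_lt_sqrt_sq_sub_of_neg {a₁ : ℝ} (a₂ : ℝ) (h1 : a₁ < 0) :
    -a₂ < √(a₂ ^ 2 - 3 * a₁) :=
  calc -a₂ ≤ |a₂| := neg_le_abs a₂
    _ = √(a₂ ^ 2) := (sqrt_sq_eq_abs a₂).symm
    _ < √(a₂ ^ 2 - 3 * a₁) := sqrt_lt_sqrt (sq_nonneg a₂) (by linarith)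

theorem cubic_pos_of_nonneg_general (a₀ a₁ a₂ : ℝ) (h1 : a₁ < 0)
    (h2 : 2 * a₂ ^ 3 - 9 * a₁ * a₂ + 27 * a₀ > 2 * (a₂ ^ 2 - 3 * a₁) ^ ((3 : ℝ) / 2)) :
    ∀ u : ℝ, 0 ≤ u → 0 < u ^ 3 + a₂ * u ^ 2 + a₁ * u + a₀ := by
  intro u hu
  have hD : 0 ≤ a₂ ^ 2 - 3 * a₁ := by nlinarith [sq_nonneg a₂]
  set s := √(a₂ ^ 2 - 3 * a₁)
  rw [rpow_three_halves_eq_mul_sqrt hD] at h2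
  have hfactor : 0 ≤ 3 * u + a₂ + 2 * s := by
    linarith [neg_lt_sqrt_sq_sub_of_neg a₂ h1, sqrt_nonneg (a₂ ^ 2 - 3 * a₁)]
  have hmin : 0 ≤ (3 * u + a₂ - s) ^ 2 * (3 * u + a₂ + 2 * s) := by positivity
  have h27 := cubic_mul_27_eq a₀ a₁ a₂ s u (sq_sqrt hD)
  linarith

/-- If `a₀ > 0`, `a₁ < 0`, and `2a₂³ − 9a₁a₂ + 27a₀ > 2(a₂² − 3a₁)^{3/2}`, then the cubic
`u³ + a₂u² + a₁u + a₀` is strictly positive for every `u ≥ 0`. -/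
theorem cubic_pos_of_nonneg (a₀ a₁ a₂ : ℝ) (h0 : 0 < a₀) (h1 : a₁ < 0)
    (h2 : 2 * a₂ ^ 3 - 9 * a₁ * a₂ + 27 * a₀ > 2 * (a₂ ^ 2 - 3 * a₁) ^ ((3 : ℝ) / 2)) :
    ∀ u : ℝ, 0 ≤ u → 0 < u ^ 3 + a₂ * u ^ 2 + a₁ * u + a₀ :=
  cubic_pos_of_nonneg_general a₀ a₁ a₂ h1 h2
end

section
/- Let l, m, n, l₁, m₁, n₁ be real numbers satisfying l² − 2(l₁+m) ≥ 0, (l₁+m)² − 2l(n+m₁) ≥ 0, (n+m₁)² − n₁² ≥ 0, and l(l₁+m) ≠ n + m₁ − n₁. Then for every δ ≥ 0 and every nonzero real ν, (iν)³ + l·(iν)² + (l₁+m)·(iν) + (n+m₁) + n₁·exp(−iνδ) ≠ 0; that is, the characteristic equation with recovery delay δ only has no nonzero purely imaginary roots for any δ ≥ 0. -/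
open Complex

/-! On the imaginary axis the delay term has modulus `|n₁|`, so a root `iν` forces
`|(iν)³ + l(iν)² + (l₁+m)(iν) + (n+m₁)|² = n₁²`. Expanding the left side turns this into
`ν⁶ + (l² − 2(l₁+m))ν⁴ + ((l₁+m)² − 2l(n+m₁))ν² + (n+m₁)² − n₁² = 0`, impossible for `ν ≠ 0`
when the three coefficients are nonnegative. -/

theorem normSq_cubic_at_imaginary (a b c ν : ℝ) :
    normSq ((I * ν) ^ 3 + (a : ℂ) * (I * ν) ^ 2 + (b : ℂ) * (I * ν) + (c : ℂ)) =
      ν ^ 6 + (a ^ 2 - 2 * b) * ν ^ 4 + (b ^ 2 - 2 * a * c) * ν ^ 2 + c ^ 2 := by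
  have hval : (I * ν) ^ 3 + (a : ℂ) * (I * ν) ^ 2 + (b : ℂ) * (I * ν) + (c : ℂ) =
      ⟨c - a * ν ^ 2, b * ν - ν ^ 3⟩ := by
    apply Complex.ext <;> simp [pow_succ] <;> ring
  rw [hval, normSq_mk]
  ring

theorem sextic_even_pos {a b c ν : ℝ} (ha : 0 ≤ a) (hb : 0 ≤ b) (hc : 0 ≤ c) (hν : ν ≠ 0) :
    0 < ν ^ 6 + a * ν ^ 4 + b * ν ^ 2 + c := by
  have : 0 < ν ^ 6 := Even.pow_pos (by decide) hν
  positivity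

theorem normSq_mul_exp_neg_I_mul (z : ℂ) (ν δ : ℝ) :
    normSq (z * exp (-(I * ν * δ))) = normSq z := by
  have hexp : -(I * ν * δ) = ((-(ν * δ) : ℝ) : ℂ) * I := by push_cast; ring
  rw [normSq_mul, hexp, normSq_eq_norm_sq (exp _), norm_exp_ofReal_mul_I, one_pow, mul_one]

theorem no_imaginary_roots_recovery_delay_general (l m n l₁ m₁ n₁ : ℝ)
    (h1 : 0 ≤ l ^ 2 - 2 * (l₁ + m))
    (h2 : 0 ≤ (l₁ + m) ^ 2 - 2 * l * (n + m₁))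
    (h3 : 0 ≤ (n + m₁) ^ 2 - n₁ ^ 2) :
    ∀ δ : ℝ, 0 ≤ δ → ∀ ν : ℝ, ν ≠ 0 →
      (I * ν) ^ 3 + (l : ℂ) * (I * ν) ^ 2 + ((l₁ : ℂ) + (m : ℂ)) * (I * ν)
        + ((n : ℂ) + (m₁ : ℂ)) + (n₁ : ℂ) * Complex.exp (-(I * ν * δ)) ≠ 0 := by
  intro δ _ ν hν hroot
  have hbalance : (n₁ : ℂ) * exp (-(I * ν * δ)) =
      -((I * ν) ^ 3 + (l : ℂ) * (I * ν) ^ 2 + ((l₁ + m : ℝ) : ℂ) * (I * ν)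
        + ((n + m₁ : ℝ) : ℂ)) := by
    push_cast
    linear_combination hroot
  have hmod := congrArg normSq hbalance
  rw [normSq_mul_exp_neg_I_mul, normSq_neg, normSq_cubic_at_imaginary, normSq_ofReal] at hmod
  have hpos := sextic_even_pos h1 h2 h3 hν
  linarith

/-- Theorem 3.5(i): under conditions (3.5) and (3.7), the characteristic equation with
recovery delay only, `λ³ + lλ² + (l₁+m)λ + (n+m₁) + n₁ e^{-λδ} = 0`, has no nonzero
purely imaginary roots for any delay `δ ≥ 0`. -/
theorem no_imaginary_roots_recovery_delay (l m n l₁ m₁ n₁ : ℝ)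
    (h1 : 0 ≤ l ^ 2 - 2 * (l₁ + m))
    (h2 : 0 ≤ (l₁ + m) ^ 2 - 2 * l * (n + m₁))
    (h3 : 0 ≤ (n + m₁) ^ 2 - n₁ ^ 2)
    (h4 : l * (l₁ + m) ≠ n + m₁ - n₁) :
    ∀ δ : ℝ, 0 ≤ δ → ∀ ν : ℝ, ν ≠ 0 →
      (I * ν) ^ 3 + (l : ℂ) * (I * ν) ^ 2 + ((l₁ : ℂ) + (m : ℂ)) * (I * ν)
        + ((n : ℂ) + (m₁ : ℂ)) + (n₁ : ℂ) * Complex.exp (-(I * ν * δ)) ≠ 0 :=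
  no_imaginary_roots_recovery_delay_general l m n l₁ m₁ n₁ h1 h2 h3
end

section
/- Let l, m, n, l₁, m₁, n₁ be real numbers with (n+m₁)² < n₁². Then there exist a real ν > 0 and a real δ ≥ 0 such that (iν)³ + l·(iν)² + (l₁+m)·(iν) + (n+m₁) + n₁·exp(−iνδ) = 0. -/
open Complex Polynomial Filter

/-! The modulus of `P(iν) = (iν)³ + l(iν)² + (l₁+m)(iν) + (n+m₁)` is `|n+m₁| < |n₁|` at `ν = 0`
and tends to infinity with `ν`, so by the intermediate value theorem `|P(iν)| = |n₁|` for some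
`ν > 0`. Then `-P(iν) / n₁` lies on the unit circle, and every point of the unit circle is
`exp(-iνδ)` for some `δ ≥ 0`. -/

theorem exists_pos_norm_eval_I_mul_eq {p : ℂ[X]} (hp : 0 < p.degree) {r : ℝ}
    (h₀ : ‖p.eval 0‖ < r) : ∃ ν : ℝ, 0 < ν ∧ ‖p.eval (I * ν)‖ = r := by
  have htendsto : Tendsto (fun ν : ℝ => ‖p.eval (I * ν)‖) atTop atTop :=
    p.tendsto_norm_atTop hp <| by simpa using tendsto_abs_atTop_atTop
  obtain ⟨b, hbr, hb₀⟩ := ((htendsto.eventually_ge_atTop r).and (eventually_ge_atTop 0)).exists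
  have hcont : ContinuousOn (fun ν : ℝ => ‖p.eval (I * ν)‖) (Set.Icc 0 b) := by fun_prop
  obtain ⟨ν, hν, hνr⟩ := intermediate_value_Icc hb₀ hcont ⟨by simpa using h₀.le, hbr⟩
  refine ⟨ν, hν.1.lt_of_ne ?_, hνr⟩
  rintro rfl
  simp only [ofReal_zero, mul_zero] at hνr
  exact h₀.ne hνr

theorem exists_nonneg_exp_neg_I_mul_eq {u : ℂ} (hu : ‖u‖ = 1) {ν : ℝ} (hν : 0 < ν) :
    ∃ δ : ℝ, 0 ≤ δ ∧ exp (-(I * ν * δ)) = u := by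
  refine ⟨(2 * Real.pi - u.arg) / ν, div_nonneg (by linarith [arg_le_pi u, Real.pi_pos]) hν.le, ?_⟩
  have hexp : -(I * ν * ((2 * Real.pi - u.arg) / ν : ℝ)) = u.arg * I - 2 * Real.pi * I := by
    push_cast
    field_simp [ofReal_ne_zero.2 hν.ne']
    ring
  rw [hexp, exp_sub, exp_two_pi_mul_I, div_one]
  simpa [hu] using norm_mul_exp_arg_mul_I u

theorem exists_nonneg_ofReal_mul_exp_neg_I_mul_eq {a : ℝ} {z : ℂ} (hz : ‖z‖ = |a|) {ν : ℝ}
    (hν : 0 < ν) : ∃ δ : ℝ, 0 ≤ δ ∧ a * exp (-(I * ν * δ)) = z := by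
  rcases eq_or_ne a 0 with rfl | ha
  · exact ⟨0, le_rfl, by simpa [eq_comm] using hz⟩
  obtain ⟨δ, hδ, hexp⟩ := exists_nonneg_exp_neg_I_mul_eq (u := z / a) (by simp [hz, ha]) hν
  exact ⟨δ, hδ, by rw [hexp, mul_div_cancel₀ _ (ofReal_ne_zero.2 ha)]⟩

/-- Theorem 3.5(ii)–(iii): if `(n+m₁)² < n₁²` then the characteristic equation with
recovery delay only acquires a purely imaginary root `iν`, `ν > 0`, at some delay
`δ ≥ 0`. -/
theorem imaginary_root_exists_recovery_delay (l m n l₁ m₁ n₁ : ℝ)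
    (h : (n + m₁) ^ 2 < n₁ ^ 2) :
    ∃ ν : ℝ, 0 < ν ∧ ∃ δ : ℝ, 0 ≤ δ ∧
      (I * ν) ^ 3 + (l : ℂ) * (I * ν) ^ 2 + ((l₁ : ℂ) + (m : ℂ)) * (I * ν)
        + ((n : ℂ) + (m₁ : ℂ)) + (n₁ : ℂ) * Complex.exp (-(I * ν * δ)) = 0 := by
  set P : ℂ[X] := X ^ 3 + C (l : ℂ) * X ^ 2 + C ((l₁ : ℂ) + m) * X + C ((n : ℂ) + m₁)
  have hP : 0 < P.degree := by
    have : P.natDegree = 3 := by simp only [P]; compute_degree!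
    exact natDegree_pos_iff_degree_pos.1 (by omega)
  have hP₀ : ‖P.eval 0‖ < |n₁| := by
    simpa [P, ← ofReal_add, Complex.norm_real] using sq_lt_sq.1 h
  obtain ⟨ν, hν, hνP⟩ := exists_pos_norm_eval_I_mul_eq hP hP₀
  obtain ⟨δ, hδ, hexp⟩ :=
    exists_nonneg_ofReal_mul_exp_neg_I_mul_eq (z := -P.eval (I * ν)) (by rwa [norm_neg]) hν
  refine ⟨ν, hν, δ, hδ, ?_⟩
  rw [hexp]
  simp only [P, eval_add, eval_pow, eval_mul, eval_C, eval_X]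
  ring
end

section
/- Let l, m, n, l₁, m₁, n₁ be real numbers with l > 0 and l₁² + 4l(n + |n₁| + |m₁|) ≥ 0. Let τ ≥ 0, δ ≥ 0 and let ν ≥ 0 be a real number such that (iν)³ + l·(iν)² + m·(iν) + n + l₁·(iν)·exp(−iντ) + m₁·exp(−iντ) + n₁·exp(−iν(τ+δ)) = 0. Then ν ≤ (|l₁| + √(l₁² + 4l(n + |n₁| + |m₁|)))/(2l). -/
open Complex

/-! At `λ = iν` the real part of the characteristic equation reads
`l ν² - n = l₁ ν sin(ντ) + m₁ cos(ντ) + n₁ cos(ν(τ+δ))`, and the right-hand side is at most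
`|l₁| |ν| + |m₁| + |n₁|`. So `|ν|` satisfies the quadratic inequality
`l x² ≤ |l₁| x + (n + |n₁| + |m₁|)` and lies below the larger root of the quadratic. -/

lemma le_quadratic_root {a b c x : ℝ} (ha : 0 < a) (hx : a * x ^ 2 ≤ b * x + c) :
    x ≤ (b + √(b ^ 2 + 4 * a * c)) / (2 * a) := by
  have hsq : (2 * a * x - b) ^ 2 ≤ b ^ 2 + 4 * a * c := by nlinarith
  rw [le_div_iff₀ (by positivity)]
  linarith [Real.le_sqrt_of_sq_le hsq]

lemma mul_le_abs_of_abs_le_one {a s : ℝ} (hs : |s| ≤ 1) : a * s ≤ |a| :=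
  (le_abs_self _).trans (by rw [abs_mul]; exact mul_le_of_le_one_right (abs_nonneg a) hs)

lemma re_charFun_I_mul (l m n l₁ m₁ n₁ τ δ ν : ℝ) :
    ((I * ν) ^ 3 + (l : ℂ) * (I * ν) ^ 2 + (m : ℂ) * (I * ν) + (n : ℂ)
        + (l₁ : ℂ) * (I * ν) * Complex.exp (-(I * ν * τ))
        + (m₁ : ℂ) * Complex.exp (-(I * ν * τ))
        + (n₁ : ℂ) * Complex.exp (-(I * ν * (τ + δ)))).re
      = n - l * ν ^ 2 + l₁ * ν * Real.sin (ν * τ) + m₁ * Real.cos (ν * τ)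
        + n₁ * Real.cos (ν * (τ + δ)) := by
  have hτ : cexp (-(I * ν * τ)) = cexp (↑(-(ν * τ)) * I) := by push_cast; ring_nf
  have hτδ : cexp (-(I * ν * (τ + δ))) = cexp (↑(-(ν * (τ + δ))) * I) := by push_cast; ring_nf
  simp only [hτ, hτδ, add_re, mul_re, mul_im, exp_ofReal_mul_I_re, exp_ofReal_mul_I_im, ofReal_re,
    ofReal_im, I_re, I_im, one_re, one_im, Real.cos_neg, Real.sin_neg, pow_succ, pow_zero]
  ring

theorem imaginary_root_bound_general (l m n l₁ m₁ n₁ τ δ ν : ℝ)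
    (hl : 0 < l)
    (h : (I * ν) ^ 3 + (l : ℂ) * (I * ν) ^ 2 + (m : ℂ) * (I * ν) + (n : ℂ)
        + (l₁ : ℂ) * (I * ν) * Complex.exp (-(I * ν * τ))
        + (m₁ : ℂ) * Complex.exp (-(I * ν * τ))
        + (n₁ : ℂ) * Complex.exp (-(I * ν * (τ + δ))) = 0) :
    ν ≤ (|l₁| + Real.sqrt (l₁ ^ 2 + 4 * l * (n + |n₁| + |m₁|))) / (2 * l) := by
  have hre : n - l * ν ^ 2 + l₁ * ν * Real.sin (ν * τ) + m₁ * Real.cos (ν * τ)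
      + n₁ * Real.cos (ν * (τ + δ)) = 0 := by
    rw [← re_charFun_I_mul, h, zero_re]
  have hquad : l * |ν| ^ 2 ≤ |l₁| * |ν| + (n + |n₁| + |m₁|) := by
    rw [sq_abs, ← abs_mul]
    linarith [mul_le_abs_of_abs_le_one (a := l₁ * ν) (Real.abs_sin_le_one (ν * τ)),
      mul_le_abs_of_abs_le_one (a := m₁) (Real.abs_cos_le_one (ν * τ)),
      mul_le_abs_of_abs_le_one (a := n₁) (Real.abs_cos_le_one (ν * (τ + δ)))]
  calc ν ≤ |ν| := le_abs_self ν
    _ ≤ _ := by simpa only [sq_abs] using le_quadratic_root hl hquad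

/-- The key estimate in Theorem 3.6: any nonnegative `ν` giving a purely imaginary root
`iν` of the full characteristic equation satisfies
`ν ≤ (|l₁| + √(l₁² + 4l(n + |n₁| + |m₁|)))/(2l)`. -/
theorem imaginary_root_bound (l m n l₁ m₁ n₁ τ δ ν : ℝ)
    (hl : 0 < l) (hdisc : 0 ≤ l₁ ^ 2 + 4 * l * (n + |n₁| + |m₁|))
    (hτ : 0 ≤ τ) (hδ : 0 ≤ δ) (hν : 0 ≤ ν)
    (h : (I * ν) ^ 3 + (l : ℂ) * (I * ν) ^ 2 + (m : ℂ) * (I * ν) + (n : ℂ)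
        + (l₁ : ℂ) * (I * ν) * Complex.exp (-(I * ν * τ))
        + (m₁ : ℂ) * Complex.exp (-(I * ν * τ))
        + (n₁ : ℂ) * Complex.exp (-(I * ν * (τ + δ))) = 0) :
    ν ≤ (|l₁| + Real.sqrt (l₁ ^ 2 + 4 * l * (n + |n₁| + |m₁|))) / (2 * l) :=
  imaginary_root_bound_general l m n l₁ m₁ n₁ τ δ ν hl h
end

section
/- Let a, b, b₁, c, d, d₁, r, α be positive real numbers with b₁ ≤ b. Then there exist real numbers x*, y*, z* with y* > 0 satisfying b·x*·y* + (c+d)·x* − α·z* = a, b₁·x*·y* − (d₁+r)·y* = 0, and r·y* = α·z*, if and only if (d₁+r)/b₁ < a/(c+d). Moreover, in that case the solution is unique and given by x* = (d₁+r)/b₁, y* = (b₁·a − (c+d)·(d₁+r))/(b·d₁ + r·(b−b₁)), z* = (r/α)·y*, and it satisfies b·x* − r > 0. -/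
/-!
On an endemic equilibrium y ≠ 0, so the second equation forces `x = (d₁ + r) / b₁`.
Using `α z = r y`, the first equation becomes `y (b x - r) = a - (c + d) x`, and
`b x - r = (b d₁ + r (b - b₁)) / b₁` is positive because `b₁ ≤ b`. Hence `y` is determined,
and it is positive exactly when `b₁ a - (c + d)(d₁ + r) > 0`, which is condition (4.3).
-/

theorem div_lt_div_iff_sub_pos {p q s t : ℝ} (hq : 0 < q) (hs : 0 < s) :
    p / q < t / s ↔ 0 < q * t - s * p := by
  rw [div_lt_div_iff₀ hq hs, sub_pos, mul_comm p, mul_comm t]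

theorem eq_div_of_mul_mul_sub_mul_eq_zero {β x y k : ℝ} (hβ : β ≠ 0) (hy : y ≠ 0)
    (h : β * x * y - k * y = 0) : x = k / β := by
  have hfactor : (β * x - k) * y = 0 := by linear_combination h
  rw [eq_div_iff hβ]
  linarith [(mul_eq_zero.1 hfactor).resolve_right hy]

section Equilibrium

variable (a b b₁ c d d₁ r α : ℝ)

/-- The equilibrium equations (4.2) of the bilinear model. -/
def IsEquilibrium (x y z : ℝ) : Prop :=
  b * x * y + (c + d) * x - α * z = a ∧ b₁ * x * y - (d₁ + r) * y = 0 ∧ r * y = α * z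

variable {a b b₁ c d d₁ r α}

theorem mul_add_mul_sub_pos (hb : 0 < b) (hd₁ : 0 < d₁) (hr : 0 ≤ r) (hbb : b₁ ≤ b) :
    0 < b * d₁ + r * (b - b₁) := by
  have := mul_nonneg hr (sub_nonneg.2 hbb)
  positivity

theorem mul_div_sub_eq (hb₁ : b₁ ≠ 0) :
    b * ((d₁ + r) / b₁) - r = (b * d₁ + r * (b - b₁)) / b₁ := by
  field_simp
  ring

theorem IsEquilibrium.eq_explicit {x y z : ℝ} (hb₁ : b₁ ≠ 0) (hα : α ≠ 0)
    (hD : b * d₁ + r * (b - b₁) ≠ 0) (hy : y ≠ 0) (h : IsEquilibrium a b b₁ c d d₁ r α x y z) :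
    x = (d₁ + r) / b₁ ∧
      y = (b₁ * a - (c + d) * (d₁ + r)) / (b * d₁ + r * (b - b₁)) ∧
      z = r / α * y := by
  obtain ⟨h₁, h₂, h₃⟩ := h
  have hx := eq_div_of_mul_mul_sub_mul_eq_zero hb₁ hy h₂
  have hreduced : y * (b * x - r) = a - (c + d) * x := by linear_combination h₁ - h₃
  rw [hx, mul_div_sub_eq hb₁] at hreduced
  refine ⟨hx, ?_, ?_⟩
  · rw [eq_div_iff hD]
    field_simp at hreduced
    linear_combination hreduced
  · field_simp
    linear_combination h₃.symm

theorem isEquilibrium_explicit (hb₁ : b₁ ≠ 0) (hα : α ≠ 0) (hD : b * d₁ + r * (b - b₁) ≠ 0) :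
    IsEquilibrium a b b₁ c d d₁ r α ((d₁ + r) / b₁)
      ((b₁ * a - (c + d) * (d₁ + r)) / (b * d₁ + r * (b - b₁)))
      (r / α * ((b₁ * a - (c + d) * (d₁ + r)) / (b * d₁ + r * (b - b₁)))) := by
  refine ⟨?_, ?_, ?_⟩ <;> field_simp <;> ring

end Equilibrium

theorem endemic_equilibrium_general (a b b₁ c d d₁ r α : ℝ)
    (hb : 0 < b) (hb₁ : 0 < b₁) (hc : 0 < c) (hd : 0 < d)
    (hd₁ : 0 < d₁) (hr : 0 < r) (hα : 0 < α) (hbb : b₁ ≤ b) :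
    ((∃ x y z : ℝ, 0 < y ∧
        b * x * y + (c + d) * x - α * z = a ∧
        b₁ * x * y - (d₁ + r) * y = 0 ∧
        r * y = α * z) ↔ (d₁ + r) / b₁ < a / (c + d)) ∧
    ((d₁ + r) / b₁ < a / (c + d) →
      (∀ x y z : ℝ, 0 < y →
          b * x * y + (c + d) * x - α * z = a →
          b₁ * x * y - (d₁ + r) * y = 0 →
          r * y = α * z →
          x = (d₁ + r) / b₁ ∧
          y = (b₁ * a - (c + d) * (d₁ + r)) / (b * d₁ + r * (b - b₁)) ∧
          z = (r / α) * ((b₁ * a - (c + d) * (d₁ + r)) / (b * d₁ + r * (b - b₁))) ∧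
          b * x - r > 0)) := by
  have hD := mul_add_mul_sub_pos hb hd₁ hr.le hbb
  have hcond := div_lt_div_iff_sub_pos (p := d₁ + r) (t := a) hb₁ (add_pos hc hd)
  refine ⟨⟨?_, fun hN ↦ ?_⟩, fun _ x y z hy h₁ h₂ h₃ ↦ ?_⟩
  · rintro ⟨x, y, z, hy, h₁, h₂, h₃⟩
    obtain ⟨-, hy', -⟩ :=
      IsEquilibrium.eq_explicit hb₁.ne' hα.ne' hD.ne' hy.ne' (x := x) ⟨h₁, h₂, h₃⟩
    rw [hy'] at hy
    exact hcond.2 ((div_pos_iff_of_pos_right hD).1 hy)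
  · exact ⟨_, _, _, div_pos (hcond.1 hN) hD, isEquilibrium_explicit hb₁.ne' hα.ne' hD.ne'⟩
  · obtain ⟨hx, hy', hz⟩ :=
      IsEquilibrium.eq_explicit hb₁.ne' hα.ne' hD.ne' hy.ne' (x := x) ⟨h₁, h₂, h₃⟩
    refine ⟨hx, hy', hy' ▸ hz, ?_⟩
    rw [hx, mul_div_sub_eq hb₁.ne']
    exact div_pos hD hb₁

/-- Existence, uniqueness and explicit form of the positive (endemic) equilibrium of the
bilinear model (Section 4, condition (4.3)). -/
theorem endemic_equilibrium (a b b₁ c d d₁ r α : ℝ)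
    (ha : 0 < a) (hb : 0 < b) (hb₁ : 0 < b₁) (hc : 0 < c) (hd : 0 < d)
    (hd₁ : 0 < d₁) (hr : 0 < r) (hα : 0 < α) (hbb : b₁ ≤ b) :
    ((∃ x y z : ℝ, 0 < y ∧
        b * x * y + (c + d) * x - α * z = a ∧
        b₁ * x * y - (d₁ + r) * y = 0 ∧
        r * y = α * z) ↔ (d₁ + r) / b₁ < a / (c + d)) ∧
    ((d₁ + r) / b₁ < a / (c + d) →
      (∀ x y z : ℝ, 0 < y →
          b * x * y + (c + d) * x - α * z = a →
          b₁ * x * y - (d₁ + r) * y = 0 →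
          r * y = α * z →
          x = (d₁ + r) / b₁ ∧
          y = (b₁ * a - (c + d) * (d₁ + r)) / (b * d₁ + r * (b - b₁)) ∧
          z = (r / α) * ((b₁ * a - (c + d) * (d₁ + r)) / (b * d₁ + r * (b - b₁))) ∧
          b * x - r > 0)) :=
  endemic_equilibrium_general a b b₁ c d d₁ r α hb hb₁ hc hd hd₁ hr hα hbb
end

section
/- Let a, b, b₁, c, d, d₁, r, α be positive real numbers with a/(c+d) < (d₁+r)/b₁. Let x, y, z : [0,∞) → ℝ be differentiable functions with x(t) ≥ 0, y(t) ≥ 0, z(t) ≥ 0 for all t ≥ 0, satisfying x'(t) = a − b·x(t)·y(t) − (c+d)·x(t) + α·z(t), y'(t) = b₁·x(t)·y(t) − (r+d₁)·y(t), z'(t) = r·y(t) − α·z(t) for all t ≥ 0. Assume in addition that there is a constant K with x(t) ≤ K < (d₁+r)/b₁ for all t ≥ 0. Then y(t) → 0, z(t) → 0, and x(t) → a/(c+d) as t → ∞; that is, the solution converges to the disease-free equilibrium (a/(c+d), 0, 0). -/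
/-!
As `x ≤ K < (d₁ + r)/b₁`, the infected class satisfies `y' ≤ -γ y` with `γ = r + d₁ - b₁ K > 0`,
so `y → 0`. Then `z` and `x - a/(c + d)` each solve a linear equation `u' = -γ u + p` with `γ > 0`
and a forcing term `p → 0` (namely `r y`, resp. `α z - b x y`, where `x` is bounded), and
Grönwall's inequality makes such a `u` tend to `0`.
-/

open Filter Topology

theorem tendsto_gronwallBound_of_neg (δ ε : ℝ) {K : ℝ} (hK : K < 0) :
    Tendsto (gronwallBound δ K ε) atTop (𝓝 (-(ε / K))) := by
  have hexp : Tendsto (fun x => Real.exp (K * x)) atTop (𝓝 0) :=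
    Real.tendsto_exp_atBot.comp (tendsto_id.const_mul_atTop_of_neg hK)
  rw [gronwallBound_of_K_ne_0 hK.ne]
  convert (hexp.const_mul δ).add ((hexp.sub_const 1).const_mul (ε / K)) using 2
  ring

theorem eventually_lt_of_deriv_le_mul_add {u u' : ℝ → ℝ} {K ε M : ℝ} (hK : K < 0)
    (hu : ∀ᶠ t in atTop, HasDerivAt u (u' t) t)
    (bound : ∀ᶠ t in atTop, u' t ≤ K * u t + ε) (hM : -(ε / K) < M) :
    ∀ᶠ t in atTop, u t < M := by
  obtain ⟨T, hT⟩ := eventually_atTop.1 (hu.and bound)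
  have hgronwall : ∀ t, T ≤ t → u t ≤ gronwallBound (u T) K ε (t - T) := fun t ht =>
    le_gronwallBound_of_liminf_deriv_right_le
      (fun s hs => (hT s hs.1).1.continuousAt.continuousWithinAt)
      (fun s hs _ hr => (hT s hs.1).1.hasDerivWithinAt.liminf_right_slope_le hr)
      le_rfl (fun s hs => (hT s hs.1).2) t ⟨ht, le_rfl⟩
  have hlim : Tendsto (fun t => gronwallBound (u T) K ε (t - T)) atTop (𝓝 (-(ε / K))) :=
    (tendsto_gronwallBound_of_neg _ _ hK).comp (tendsto_atTop_add_const_right _ (-T) tendsto_id)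
  filter_upwards [hlim.eventually_lt_const hM, eventually_ge_atTop T] with t hlt ht
  exact (hgronwall t ht).trans_lt hlt

theorem eventually_lt_of_deriv_le_of_tendsto {u u' p : ℝ → ℝ} {γ M : ℝ} (hγ : 0 < γ)
    (hu : ∀ᶠ t in atTop, HasDerivAt u (u' t) t)
    (bound : ∀ᶠ t in atTop, u' t ≤ -γ * u t + p t) (hp : Tendsto p atTop (𝓝 0)) (hM : 0 < M) :
    ∀ᶠ t in atTop, u t < M := by
  refine eventually_lt_of_deriv_le_mul_add (ε := γ * M / 2) (neg_lt_zero.2 hγ) hu ?_ ?_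
  · filter_upwards [bound, hp.eventually_le_const (by positivity : (0 : ℝ) < γ * M / 2)]
      with t hbound hpt
    linarith
  · rw [div_neg, neg_neg, show γ * M / 2 / γ = M / 2 by field_simp]
    linarith

theorem tendsto_zero_of_hasDerivAt {u p : ℝ → ℝ} {γ : ℝ} (hγ : 0 < γ)
    (hu : ∀ᶠ t in atTop, HasDerivAt u (-γ * u t + p t) t) (hp : Tendsto p atTop (𝓝 0)) :
    Tendsto u atTop (𝓝 0) := by
  refine tendsto_order.2 ⟨fun m hm => ?_, fun M hM =>
    eventually_lt_of_deriv_le_of_tendsto hγ hu (.of_forall fun _ => le_rfl) hp hM⟩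
  have hneg : ∀ᶠ t in atTop, -u t < -m :=
    eventually_lt_of_deriv_le_of_tendsto (p := fun t => -p t) hγ (hu.mono fun t ht => ht.neg)
      (.of_forall fun t => by linarith) (by simpa using hp.neg) (neg_pos.2 hm)
  exact hneg.mono fun t ht => by linarith

theorem tendsto_zero_of_nonneg_of_deriv_le {u u' : ℝ → ℝ} {γ : ℝ} (hγ : 0 < γ)
    (hu : ∀ᶠ t in atTop, HasDerivAt u (u' t) t) (hnonneg : ∀ᶠ t in atTop, 0 ≤ u t)
    (bound : ∀ᶠ t in atTop, u' t ≤ -γ * u t) :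
    Tendsto u atTop (𝓝 0) :=
  tendsto_order.2 ⟨fun _ hm => hnonneg.mono fun _ ht => hm.trans_le ht, fun _ hM =>
    eventually_lt_of_deriv_le_of_tendsto hγ hu (bound.mono fun t ht => by simpa using ht)
      tendsto_const_nhds hM⟩

theorem disease_free_global_stability_general (a b b₁ c d d₁ r α : ℝ)
    (hb₁ : 0 < b₁) (hc : 0 < c) (hd : 0 < d)
    (hα : 0 < α)
    (x y z : ℝ → ℝ)
    (hx0 : ∀ t : ℝ, 0 ≤ t → 0 ≤ x t)
    (hy0 : ∀ t : ℝ, 0 ≤ t → 0 ≤ y t)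
    (hx : ∀ t : ℝ, 0 ≤ t →
      HasDerivAt x (a - b * x t * y t - (c + d) * x t + α * z t) t)
    (hy : ∀ t : ℝ, 0 ≤ t →
      HasDerivAt y (b₁ * x t * y t - (r + d₁) * y t) t)
    (hz : ∀ t : ℝ, 0 ≤ t →
      HasDerivAt z (r * y t - α * z t) t)
    (K : ℝ) (hK : K < (d₁ + r) / b₁) (hxK : ∀ t : ℝ, 0 ≤ t → x t ≤ K) :
    Tendsto y atTop (nhds 0) ∧ Tendsto z atTop (nhds 0) ∧
      Tendsto x atTop (nhds (a / (c + d))) := by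
  have hγ : 0 < r + d₁ - b₁ * K := by linarith [(lt_div_iff₀' hb₁).1 hK]
  have hy_lim : Tendsto y atTop (𝓝 0) :=
    tendsto_zero_of_nonneg_of_deriv_le hγ ((eventually_ge_atTop 0).mono hy)
      ((eventually_ge_atTop 0).mono hy0) <| (eventually_ge_atTop 0).mono fun t ht => by
        nlinarith [mul_nonneg (mul_nonneg hb₁.le (sub_nonneg.2 (hxK t ht))) (hy0 t ht)]
  have hz_lim : Tendsto z atTop (𝓝 0) :=
    tendsto_zero_of_hasDerivAt (p := fun t => r * y t) hα
      ((eventually_ge_atTop 0).mono fun t ht => (hz t ht).congr_deriv (by ring))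
      (by simpa using hy_lim.const_mul r)
  have hx_bdd : IsBoundedUnder (· ≤ ·) atTop (norm ∘ x) :=
    isBoundedUnder_of_eventually_le (a := K) <| (eventually_ge_atTop 0).mono fun t ht => by
      simpa [abs_of_nonneg (hx0 t ht)] using hxK t ht
  have hxy_lim : Tendsto (fun t => b * x t * y t) atTop (𝓝 0) := by
    simpa [mul_assoc] using (isBoundedUnder_le_mul_tendsto_zero hx_bdd hy_lim).const_mul b
  have hx_lim : Tendsto (fun t => x t - a / (c + d)) atTop (𝓝 0) :=
    tendsto_zero_of_hasDerivAt (γ := c + d) (p := fun t => α * z t - b * x t * y t)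
      (by positivity)
      ((eventually_ge_atTop 0).mono fun t ht => ((hx t ht).sub_const _).congr_deriv
        (by field_simp; ring))
      (by simpa using (hz_lim.const_mul α).sub hxy_lim)
  exact ⟨hy_lim, hz_lim, by simpa using hx_lim.add_const (a / (c + d))⟩

/-- Delay-free instance of Theorem 4.2: global asymptotic stability of the disease-free
equilibrium `(a/(c+d), 0, 0)` of the bilinear model when `a/(c+d) < (d₁+r)/b₁`,
assuming the susceptible population stays bounded below the threshold. -/
theorem disease_free_global_stability (a b b₁ c d d₁ r α : ℝ)
    (ha : 0 < a) (hb : 0 < b) (hb₁ : 0 < b₁) (hc : 0 < c) (hd : 0 < d)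
    (hd₁ : 0 < d₁) (hr : 0 < r) (hα : 0 < α)
    (h : a / (c + d) < (d₁ + r) / b₁)
    (x y z : ℝ → ℝ)
    (hx0 : ∀ t : ℝ, 0 ≤ t → 0 ≤ x t)
    (hy0 : ∀ t : ℝ, 0 ≤ t → 0 ≤ y t)
    (hz0 : ∀ t : ℝ, 0 ≤ t → 0 ≤ z t)
    (hx : ∀ t : ℝ, 0 ≤ t →
      HasDerivAt x (a - b * x t * y t - (c + d) * x t + α * z t) t)
    (hy : ∀ t : ℝ, 0 ≤ t →
      HasDerivAt y (b₁ * x t * y t - (r + d₁) * y t) t)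
    (hz : ∀ t : ℝ, 0 ≤ t →
      HasDerivAt z (r * y t - α * z t) t)
    (K : ℝ) (hK : K < (d₁ + r) / b₁) (hxK : ∀ t : ℝ, 0 ≤ t → x t ≤ K) :
    Tendsto y atTop (nhds 0) ∧ Tendsto z atTop (nhds 0) ∧
      Tendsto x atTop (nhds (a / (c + d))) :=
  disease_free_global_stability_general a b b₁ c d d₁ r α hb₁ hc hd hα x y z hx0 hy0 hx hy hz K hK
    hxK
end
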